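/- arXiv:2403.04295 — 5 statements merged into one kernel-verified Lean document; each statement's English description precedes it below -/
import Mathlib

section
/- Let ρ ≥ γ ≥ 0 with ρ + γ > 1 and ρ < 1. Then there is a constant C (depending only on ρ, γ) such that for all real c₁, c₂, ∫_ℝ ⟨x - c₁⟩^{-ρ} ⟨x - c₂⟩^{-γ} dx ≤ C ⟨c₁ - c₂⟩^{-γ} ⟨c₁ - c₂⟩^{1-ρ}. -/
/-!
Write `S = ⟨c₁ - c₂⟩`. If `x` is at least as close to `c₁` as to `c₂`, then
`⟨x - c₂⟩ ≥ max (S / 2) |x - c₁|`, so the integrand is at most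
`|y| ^ (-ρ) * max (S / 2) |y| ^ (-γ)` with `y = x - c₁`; symmetrically with the roles of
`(c₁, ρ)` and `(c₂, γ)` exchanged. This majorant integrates in closed form to a multiple of
`(S / 2) ^ (1 - ρ - γ)`: the singularity at `0` is integrable since `ρ < 1` and `γ < 1`, and
the tail since `ρ + γ > 1`.
-/

open MeasureTheory Real Set
open scoped ENNReal

theorem lintegral_comp_abs (f : ℝ → ℝ≥0∞) :
    ∫⁻ x, f |x| = 2 * ∫⁻ x in Ioi 0, f x := by
  have hIoi : ∫⁻ x in Ioi 0, f |x| = ∫⁻ x in Ioi 0, f x :=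
    setLIntegral_congr_fun measurableSet_Ioi fun x hx => by rw [abs_of_pos hx]
  have hIic : ∫⁻ x in Iic 0, f |x| = ∫⁻ x in Ioi 0, f |x| := by
    have := (Measure.measurePreserving_neg (volume : Measure ℝ)).setLIntegral_comp_preimage_emb
      measurableEmbedding_neg (fun x => f |x|) (Iic 0)
    simp only [abs_neg, neg_preimage, neg_Iic, neg_zero] at this
    rw [← this, setLIntegral_congr Ioi_ae_eq_Ici]
  rw [← lintegral_add_compl _ measurableSet_Iic, compl_Iic, hIic, hIoi, two_mul]

theorem lintegral_Ioc_rpow {a T : ℝ} (ha : a < 1) (hT : 0 < T) :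
    ∫⁻ t in Ioc 0 T, ENNReal.ofReal (t ^ (-a)) = ENNReal.ofReal (T ^ (1 - a) / (1 - a)) := by
  rw [← ofReal_integral_eq_lintegral_ofReal, ← intervalIntegral.integral_of_le hT.le,
    integral_rpow (Or.inl (by linarith)), zero_rpow (by linarith), neg_add_eq_sub, sub_zero]
  · exact (intervalIntegral.intervalIntegrable_rpow' (by linarith)).1
  · filter_upwards [ae_restrict_mem measurableSet_Ioc] with t ht
    exact rpow_nonneg ht.1.le _

theorem lintegral_Ioi_rpow {b T : ℝ} (hb : 1 < b) (hT : 0 < T) :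
    ∫⁻ t in Ioi T, ENNReal.ofReal (t ^ (-b)) = ENNReal.ofReal (T ^ (1 - b) / (b - 1)) := by
  rw [← ofReal_integral_eq_lintegral_ofReal, integral_Ioi_rpow_of_lt (by linarith) hT,
    neg_add_eq_sub, neg_div, ← div_neg, neg_sub]
  · exact integrableOn_Ioi_rpow_of_lt (by linarith) hT
  · filter_upwards [ae_restrict_mem measurableSet_Ioi] with t ht
    exact rpow_nonneg (hT.trans ht).le _

theorem lintegral_Ioi_rpow_mul_max_rpow {a b T : ℝ} (ha : a < 1) (hab : 1 < a + b)
    (hT : 0 < T) :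
    ∫⁻ t in Ioi 0, ENNReal.ofReal (t ^ (-a) * max T t ^ (-b)) =
      ENNReal.ofReal (T ^ (1 - a - b) * (1 / (1 - a) + 1 / (a + b - 1))) := by
  have hIoc : ∫⁻ t in Ioc 0 T, ENNReal.ofReal (t ^ (-a) * max T t ^ (-b)) =
      ENNReal.ofReal (T ^ (-b)) * ENNReal.ofReal (T ^ (1 - a) / (1 - a)) := by
    rw [← lintegral_Ioc_rpow ha hT, ← lintegral_const_mul' _ _ ENNReal.ofReal_ne_top]
    refine setLIntegral_congr_fun measurableSet_Ioc fun t ht => ?_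
    rw [max_eq_left ht.2, mul_comm, ENNReal.ofReal_mul (rpow_nonneg hT.le _)]
  have hIoi : ∫⁻ t in Ioi T, ENNReal.ofReal (t ^ (-a) * max T t ^ (-b)) =
      ENNReal.ofReal (T ^ (1 - (a + b)) / (a + b - 1)) := by
    rw [← lintegral_Ioi_rpow hab hT]
    refine setLIntegral_congr_fun measurableSet_Ioi fun t ht => ?_
    rw [max_eq_right (le_of_lt ht), ← rpow_add (hT.trans ht), neg_add]
  have hpos : 0 ≤ T ^ (1 - (a + b)) / (a + b - 1) :=
    div_nonneg (rpow_nonneg hT.le _) (by linarith)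
  rw [← Ioc_union_Ioi_eq_Ioi hT.le, lintegral_union measurableSet_Ioi Ioc_disjoint_Ioi_same,
    hIoc, hIoi, ← ENNReal.ofReal_mul (rpow_nonneg hT.le _),
    ← ENNReal.ofReal_add (by positivity) hpos]
  congr 1
  rw [mul_div_assoc', ← rpow_add hT, mul_add, mul_one_div, mul_one_div]
  ring_nf

theorem lintegral_abs_rpow_mul_max_rpow {a b T : ℝ} (ha : a < 1) (hab : 1 < a + b)
    (hT : 0 < T) :
    ∫⁻ u, ENNReal.ofReal (|u| ^ (-a) * max T |u| ^ (-b)) =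
      ENNReal.ofReal (2 * T ^ (1 - a - b) * (1 / (1 - a) + 1 / (a + b - 1))) := by
  rw [lintegral_comp_abs (fun t => ENNReal.ofReal (t ^ (-a) * max T t ^ (-b))),
    lintegral_Ioi_rpow_mul_max_rpow ha hab hT, mul_assoc, ENNReal.ofReal_mul zero_le_two,
    ENNReal.ofReal_ofNat]

theorem integrable_abs_rpow_mul_max_rpow {a b T : ℝ} (ha : a < 1) (hab : 1 < a + b)
    (hT : 0 < T) : Integrable fun u : ℝ => |u| ^ (-a) * max T |u| ^ (-b) := by
  refine ⟨by fun_prop, ?_⟩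
  rw [hasFiniteIntegral_iff_ofReal (ae_of_all _ fun u => by positivity),
    lintegral_abs_rpow_mul_max_rpow ha hab hT]
  exact ENNReal.ofReal_lt_top

theorem integral_abs_rpow_mul_max_rpow {a b T : ℝ} (ha : a < 1) (hab : 1 < a + b)
    (hT : 0 < T) :
    ∫ u, |u| ^ (-a) * max T |u| ^ (-b) =
      2 * T ^ (1 - a - b) * (1 / (1 - a) + 1 / (a + b - 1)) := by
  rw [integral_eq_lintegral_of_nonneg_ae (ae_of_all _ fun u => by positivity) (by fun_prop),
    lintegral_abs_rpow_mul_max_rpow ha hab hT, ENNReal.toReal_ofReal]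
  have : 0 < 1 - a := by linarith
  have : 0 < a + b - 1 := by linarith
  positivity

theorem sqrt_one_add_sq_sub_le {p q : ℝ} (h : |p| ≤ |q|) :
    √(1 + (q - p) ^ 2) ≤ 2 * √(1 + q ^ 2) := by
  have hqp : (q - p) ^ 2 ≤ (2 * q) ^ 2 := by
    refine sq_le_sq.mpr ((abs_sub _ _).trans ?_)
    rw [abs_mul, abs_two]
    linarith
  rw [show (2 : ℝ) = √(2 ^ 2) by simp, ← sqrt_mul (by positivity)]
  exact sqrt_le_sqrt (by nlinarith)

theorem sqrt_one_add_sq_rpow_mul_rpow_le {u v a b T : ℝ} (ha : 0 ≤ a) (hb : 0 ≤ b)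
    (hu : u ≠ 0) (huv : |u| ≤ |v|) (hT : 0 < T) (hTv : T ≤ √(1 + v ^ 2)) :
    √(1 + u ^ 2) ^ (-a) * √(1 + v ^ 2) ^ (-b) ≤ |u| ^ (-a) * max T |u| ^ (-b) := by
  have habs : ∀ w : ℝ, |w| ≤ √(1 + w ^ 2) := fun w => abs_le_sqrt (by linarith)
  have hmax : max T |u| ≤ √(1 + v ^ 2) := max_le hTv (huv.trans (habs v))
  exact mul_le_mul
    (rpow_le_rpow_of_nonpos (abs_pos.mpr hu) (habs u) (neg_nonpos.mpr ha))
    (rpow_le_rpow_of_nonpos (lt_max_of_lt_left hT) hmax (neg_nonpos.mpr hb))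
    (by positivity) (by positivity)

theorem sqrt_one_add_sq_rpow_mul_rpow_le_add {c₁ c₂ a b x : ℝ} (ha : 0 ≤ a) (hb : 0 ≤ b)
    (hx₁ : x ≠ c₁) (hx₂ : x ≠ c₂) :
    √(1 + (x - c₁) ^ 2) ^ (-a) * √(1 + (x - c₂) ^ 2) ^ (-b) ≤
      |x - c₁| ^ (-a) * max (√(1 + (c₁ - c₂) ^ 2) / 2) |x - c₁| ^ (-b) +
        |x - c₂| ^ (-b) * max (√(1 + (c₁ - c₂) ^ 2) / 2) |x - c₂| ^ (-a) := by
  have hT : 0 < √(1 + (c₁ - c₂) ^ 2) / 2 := by positivity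
  rcases le_total |x - c₁| |x - c₂| with h | h
  · refine le_add_of_le_of_nonneg
      (sqrt_one_add_sq_rpow_mul_rpow_le ha hb (sub_ne_zero.mpr hx₁) h hT ?_) (by positivity)
    rw [div_le_iff₀' two_pos]
    simpa using sqrt_one_add_sq_sub_le h
  · refine le_add_of_nonneg_of_le (by positivity) ?_
    rw [mul_comm]
    refine sqrt_one_add_sq_rpow_mul_rpow_le hb ha (sub_ne_zero.mpr hx₂) h hT ?_
    rw [div_le_iff₀' two_pos, ← neg_sub, neg_sq]
    simpa using sqrt_one_add_sq_sub_le h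

theorem integral_sqrt_one_add_sq_rpow_mul_rpow_le {a b : ℝ} (ha : 0 ≤ a) (hb : 0 ≤ b)
    (ha₁ : a < 1) (hb₁ : b < 1) (hab : 1 < a + b) (c₁ c₂ : ℝ) :
    ∫ x, √(1 + (x - c₁) ^ 2) ^ (-a) * √(1 + (x - c₂) ^ 2) ^ (-b) ≤
      2 * (√(1 + (c₁ - c₂) ^ 2) / 2) ^ (1 - a - b) *
        (1 / (1 - a) + 1 / (1 - b) + 2 / (a + b - 1)) := by
  set T := √(1 + (c₁ - c₂) ^ 2) / 2
  have hT : 0 < T := by positivity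
  have hba : 1 < b + a := by linarith
  have hint₁ := (integrable_abs_rpow_mul_max_rpow ha₁ hab hT).comp_sub_right c₁
  have hint₂ := (integrable_abs_rpow_mul_max_rpow hb₁ hba hT).comp_sub_right c₂
  have hbound : ∀ᵐ x : ℝ, √(1 + (x - c₁) ^ 2) ^ (-a) * √(1 + (x - c₂) ^ 2) ^ (-b) ≤
      |x - c₁| ^ (-a) * max T |x - c₁| ^ (-b) +
        |x - c₂| ^ (-b) * max T |x - c₂| ^ (-a) := by
    filter_upwards [Measure.ae_ne volume c₁, Measure.ae_ne volume c₂] with x hx₁ hx₂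
    exact sqrt_one_add_sq_rpow_mul_rpow_le_add ha hb hx₁ hx₂
  calc _ ≤ ∫ x, (|x - c₁| ^ (-a) * max T |x - c₁| ^ (-b) +
        |x - c₂| ^ (-b) * max T |x - c₂| ^ (-a)) :=
        integral_mono_of_nonneg (ae_of_all _ fun x => by positivity) (hint₁.add hint₂) hbound
    _ = 2 * T ^ (1 - a - b) * (1 / (1 - a) + 1 / (a + b - 1)) +
        2 * T ^ (1 - b - a) * (1 / (1 - b) + 1 / (b + a - 1)) := by
      rw [integral_add hint₁ hint₂,
        integral_sub_right_eq_self (fun u => |u| ^ (-a) * max T |u| ^ (-b)),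
        integral_sub_right_eq_self (fun u => |u| ^ (-b) * max T |u| ^ (-a)),
        integral_abs_rpow_mul_max_rpow ha₁ hab hT, integral_abs_rpow_mul_max_rpow hb₁ hba hT]
    _ = _ := by
      rw [show 1 - b - a = 1 - a - b by ring, show b + a - 1 = a + b - 1 by ring]
      ring

theorem stmt_1 (ρ γ : ℝ) (hργ : γ ≤ ρ) (hγ : 0 ≤ γ) (hsum : 1 < ρ + γ) (hρ : ρ < 1) :
    ∃ C : ℝ, 0 < C ∧ ∀ c₁ c₂ : ℝ,
      (∫ x : ℝ, (Real.sqrt (1 + (x - c₁) ^ 2)) ^ (-ρ) * (Real.sqrt (1 + (x - c₂) ^ 2)) ^ (-γ))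
        ≤ C * (Real.sqrt (1 + (c₁ - c₂) ^ 2)) ^ (-γ)
            * (Real.sqrt (1 + (c₁ - c₂) ^ 2)) ^ (1 - ρ) := by
  have hγ₁ : γ < 1 := hργ.trans_lt hρ
  refine ⟨2 ^ (ρ + γ) * (1 / (1 - ρ) + 1 / (1 - γ) + 2 / (ρ + γ - 1)), by positivity,
    fun c₁ c₂ => ?_⟩
  have hbound := integral_sqrt_one_add_sq_rpow_mul_rpow_le (hγ.trans hργ) hγ hρ hγ₁ hsum c₁ c₂
  refine hbound.trans_eq ?_
  set S := √(1 + (c₁ - c₂) ^ 2)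
  have hS : 0 < S := by positivity
  have h2 : (2 : ℝ) ^ (ρ + γ) = 2 / 2 ^ (1 - ρ - γ) := by
    rw [show ρ + γ = 1 - (1 - ρ - γ) by ring, rpow_sub two_pos 1, rpow_one]
  rw [div_rpow hS.le zero_le_two, mul_assoc _ (S ^ (-γ)), ← rpow_add hS, h2]
  ring_nf
end

section
/- Let ρ = 1 and 0 ≤ γ ≤ 1 with 1 + γ > 1 (i.e. γ > 0). Then there is a constant C (depending only on γ) such that for all real c₁, c₂, ∫_ℝ ⟨x - c₁⟩^{-1} ⟨x - c₂⟩^{-γ} dx ≤ C ⟨c₁ - c₂⟩^{-γ} log(1 + ⟨c₁ - c₂⟩). -/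
/-!
Translating by `c₁` turns the integrand into `⟨y⟩⁻¹ ⟨y + a⟩^(-γ)` with `a = c₁ - c₂`.
For `|y| ≤ 2⟨a⟩` it is at most `2⟨a⟩^(-γ) (⟨y⟩⁻¹ + ⟨y + a⟩⁻¹)`, whose integral over that range
is a sum of values of `arsinh` at points `≤ 3⟨a⟩`, hence `O(⟨a⟩^(-γ) log (1 + ⟨a⟩))`.
For `|y| ≥ 2⟨a⟩` we have `⟨y⟩ ≤ 2⟨y + a⟩`, so the integrand is at most `2|y|^(-1-γ)`,
and the two tails contribute `O(⟨a⟩^(-γ) / γ)`.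
-/

open MeasureTheory Real Set

noncomputable def japaneseBracket (x : ℝ) : ℝ := √(1 + x ^ 2)

lemma japaneseBracket_pos (x : ℝ) : 0 < japaneseBracket x := sqrt_pos.2 (by positivity)

lemma one_le_japaneseBracket (x : ℝ) : 1 ≤ japaneseBracket x :=
  one_le_sqrt.2 (by nlinarith [sq_nonneg x])

lemma abs_le_japaneseBracket (x : ℝ) : |x| ≤ japaneseBracket x :=
  abs_le_sqrt (by nlinarith)

lemma japaneseBracket_neg (x : ℝ) : japaneseBracket (-x) = japaneseBracket x := by
  simp [japaneseBracket]

lemma japaneseBracket_add_le (u v : ℝ) :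
    japaneseBracket (u + v) ≤ japaneseBracket u + |v| := by
  have hu := abs_le_japaneseBracket u
  have hsq : japaneseBracket u ^ 2 = 1 + u ^ 2 := sq_sqrt (by positivity)
  refine sqrt_le_iff.2 ⟨add_nonneg (japaneseBracket_pos u).le (abs_nonneg v), ?_⟩
  nlinarith [sq_abs v, le_abs_self (u * v), abs_mul u v, abs_nonneg v]

lemma continuous_japaneseBracket : Continuous japaneseBracket := by
  unfold japaneseBracket; fun_prop

lemma continuous_inv_japaneseBracket : Continuous fun x => (japaneseBracket x)⁻¹ :=
  continuous_japaneseBracket.inv₀ fun x => (japaneseBracket_pos x).ne'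

lemma rpow_neg_le_two_mul_rpow_neg {x d γ : ℝ} (hd : 0 < d) (hx : d ≤ 2 * x)
    (hγ0 : 0 ≤ γ) (hγ1 : γ ≤ 1) : x ^ (-γ) ≤ 2 * d ^ (-γ) :=
  calc x ^ (-γ) ≤ (d / 2) ^ (-γ) :=
        rpow_le_rpow_of_nonpos (by positivity) (by linarith) (by linarith)
    _ = 2 ^ γ * d ^ (-γ) := by
      rw [div_rpow hd.le zero_le_two, rpow_neg zero_le_two, div_inv_eq_mul, mul_comm]
    _ ≤ 2 * d ^ (-γ) := by
      gcongr
      exact rpow_le_self_of_one_le one_le_two hγ1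

lemma inv_mul_rpow_neg {x : ℝ} (hx : 0 < x) (γ : ℝ) : x⁻¹ * x ^ (-γ) = x ^ (-(1 + γ)) := by
  rw [← rpow_neg_one, ← rpow_add hx]; ring_nf

noncomputable def bracketProduct (γ a y : ℝ) : ℝ :=
  (japaneseBracket y)⁻¹ * japaneseBracket (y + a) ^ (-γ)

lemma continuous_bracketProduct (γ a : ℝ) : Continuous (bracketProduct γ a) :=
  continuous_inv_japaneseBracket.mul <|
    (continuous_japaneseBracket.comp (continuous_add_const a)).rpow_const
      fun y => Or.inl (japaneseBracket_pos (y + a)).ne'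

lemma bracketProduct_nonneg (γ a y : ℝ) : 0 ≤ bracketProduct γ a y :=
  mul_nonneg (inv_nonneg.2 (japaneseBracket_pos y).le) (rpow_nonneg (japaneseBracket_pos _).le _)

lemma bracketProduct_neg (γ a y : ℝ) : bracketProduct γ a (-y) = bracketProduct γ (-a) y := by
  rw [bracketProduct, bracketProduct, show -y + a = -(y + -a) by ring, japaneseBracket_neg,
    japaneseBracket_neg]

/-- Since `⟨a⟩ ≤ ⟨y⟩ + ⟨y + a⟩`, one of the two brackets is at least `⟨a⟩ / 2` and supplies
the decay `⟨a⟩^(-γ)`. -/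
lemma bracketProduct_le_inv_add_inv {γ : ℝ} (hγ0 : 0 ≤ γ) (hγ1 : γ ≤ 1) (a y : ℝ) :
    bracketProduct γ a y ≤
      2 * japaneseBracket a ^ (-γ) * ((japaneseBracket y)⁻¹ + (japaneseBracket (y + a))⁻¹) := by
  set D := japaneseBracket a
  set P := japaneseBracket y
  set Q := japaneseBracket (y + a)
  have hD : 0 < D := japaneseBracket_pos a
  have hP : 0 < P := japaneseBracket_pos y
  have hQ : 0 < Q := japaneseBracket_pos (y + a)
  have hDPQ : D ≤ Q + P := by
    have := japaneseBracket_add_le (y + a) (-y)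
    rw [add_neg_cancel_comm, abs_neg] at this
    linarith [abs_le_japaneseBracket y]
  rcases le_or_gt D (2 * Q) with hDQ | hQD
  · calc P⁻¹ * Q ^ (-γ) ≤ P⁻¹ * (2 * D ^ (-γ)) := by
          gcongr; exact rpow_neg_le_two_mul_rpow_neg hD hDQ hγ0 hγ1
      _ ≤ 2 * D ^ (-γ) * (P⁻¹ + Q⁻¹) := by
          have : 0 ≤ D ^ (-γ) * Q⁻¹ := by positivity
          nlinarith
  · have hQ_le : Q ^ (-γ) ≤ D ^ (1 - γ) * Q⁻¹ := by
      rw [show -γ = (1 - γ) + -1 by ring, rpow_add hQ, rpow_neg_one]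
      gcongr
      linarith
    calc P⁻¹ * Q ^ (-γ) ≤ (2 * D⁻¹) * (D ^ (1 - γ) * Q⁻¹) := by
          gcongr
          rw [inv_le_comm₀ hP (by positivity), mul_inv, inv_inv]
          linarith
      _ = 2 * D ^ (-γ) * Q⁻¹ := by
          rw [sub_eq_add_neg, rpow_add hD, rpow_one]; field_simp
      _ ≤ 2 * D ^ (-γ) * (P⁻¹ + Q⁻¹) := by
          have : 0 ≤ D ^ (-γ) * P⁻¹ := by positivity
          nlinarith

lemma bracketProduct_le_two_mul_rpow_of_le {γ : ℝ} (hγ0 : 0 ≤ γ) (hγ1 : γ ≤ 1) {a y : ℝ}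
    (hy : 2 * japaneseBracket a ≤ y) : bracketProduct γ a y ≤ 2 * y ^ (-(1 + γ)) := by
  have hP := japaneseBracket_pos y
  have hy0 : 0 < y := by linarith [japaneseBracket_pos a]
  have hyP : y ≤ japaneseBracket y := (le_abs_self y).trans (abs_le_japaneseBracket y)
  have hPQ : japaneseBracket y ≤ 2 * japaneseBracket (y + a) := by
    have := japaneseBracket_add_le (y + a) (-a)
    rw [add_neg_cancel_right, abs_neg] at this
    linarith [abs_le_japaneseBracket a]
  calc bracketProduct γ a y ≤ (japaneseBracket y)⁻¹ * (2 * japaneseBracket y ^ (-γ)) :=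
        mul_le_mul_of_nonneg_left (rpow_neg_le_two_mul_rpow_neg hP hPQ hγ0 hγ1) (by positivity)
    _ = 2 * japaneseBracket y ^ (-(1 + γ)) := by rw [mul_left_comm, inv_mul_rpow_neg hP]
    _ ≤ 2 * y ^ (-(1 + γ)) := by
        gcongr 2 * ?_
        exact rpow_le_rpow_of_nonpos hy0 hyP (by linarith)

lemma bracketProduct_le_mul_rpow_neg {γ : ℝ} (hγ0 : 0 ≤ γ) (a y : ℝ) :
    bracketProduct γ a y ≤ (2 * japaneseBracket a) ^ γ * japaneseBracket y ^ (-(1 + γ)) := by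
  have hD := japaneseBracket_pos a
  have hP := japaneseBracket_pos y
  have hPQ : japaneseBracket y ≤ 2 * japaneseBracket a * japaneseBracket (y + a) := by
    have := japaneseBracket_add_le (y + a) (-a)
    rw [add_neg_cancel_right, abs_neg] at this
    nlinarith [abs_le_japaneseBracket a, one_le_japaneseBracket a, one_le_japaneseBracket (y + a)]
  calc bracketProduct γ a y
      ≤ (japaneseBracket y)⁻¹ * (japaneseBracket y / (2 * japaneseBracket a)) ^ (-γ) := by
        refine mul_le_mul_of_nonneg_left (rpow_le_rpow_of_nonpos (by positivity) ?_ (by linarith))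
          (by positivity)
        rwa [div_le_iff₀ (by positivity), mul_comm]
    _ = (2 * japaneseBracket a) ^ γ * japaneseBracket y ^ (-(1 + γ)) := by
        rw [div_rpow hP.le (by positivity), rpow_neg (by positivity : 0 ≤ 2 * japaneseBracket a),
          div_inv_eq_mul, ← mul_assoc, inv_mul_rpow_neg hP, mul_comm]

lemma integrable_rpow_neg_japaneseBracket {r : ℝ} (hr : 1 < r) :
    Integrable fun y => japaneseBracket y ^ (-r) := by
  have := integrable_rpow_neg_one_add_norm_sq (E := ℝ) (μ := volume) (r := r) (by simpa using hr)
  refine this.congr (ae_of_all _ fun y => ?_)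
  simp only [japaneseBracket, norm_eq_abs, sq_abs, sqrt_eq_rpow,
    ← rpow_mul (by positivity : (0 : ℝ) ≤ 1 + y ^ 2)]
  ring_nf

lemma integrable_bracketProduct {γ : ℝ} (hγ0 : 0 < γ) (a : ℝ) :
    Integrable (bracketProduct γ a) := by
  refine ((integrable_rpow_neg_japaneseBracket (r := 1 + γ) (by linarith)).const_mul
    ((2 * japaneseBracket a) ^ γ)).mono' ?_ (ae_of_all _ fun y => ?_)
  · exact (continuous_bracketProduct γ a).aestronglyMeasurable
  · rw [norm_of_nonneg (bracketProduct_nonneg γ a y)]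
    exact bracketProduct_le_mul_rpow_neg hγ0.le a y

lemma intervalIntegral_inv_japaneseBracket_add (c u v : ℝ) :
    ∫ y in u..v, (japaneseBracket (y + c))⁻¹ = arsinh (v + c) - arsinh (u + c) := by
  rw [intervalIntegral.integral_comp_add_right (fun y => (japaneseBracket y)⁻¹) c]
  exact intervalIntegral.integral_eq_sub_of_hasDerivAt (fun x _ => hasDerivAt_arsinh x)
    (continuous_inv_japaneseBracket.intervalIntegrable _ _)

lemma intervalIntegral_inv_japaneseBracket_add_le (c R : ℝ) :
    ∫ y in -R..R, (japaneseBracket (y + c))⁻¹ ≤ 2 * arsinh (R + |c|) := by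
  rw [intervalIntegral_inv_japaneseBracket_add, show -R + c = -(R - c) by ring, arsinh_neg]
  have h₁ : arsinh (R + c) ≤ arsinh (R + |c|) := arsinh_le_arsinh.2 (by linarith [le_abs_self c])
  have h₂ : arsinh (R - c) ≤ arsinh (R + |c|) := arsinh_le_arsinh.2 (by linarith [neg_le_abs c])
  linarith

lemma arsinh_three_mul_le_three_mul_log {x : ℝ} (hx : 1 ≤ x) :
    arsinh (3 * x) ≤ 3 * log (1 + x) := by
  rw [← log_rpow (by linarith), ← exp_le_exp, exp_arsinh, exp_log (by positivity)]
  have : √(1 + (3 * x) ^ 2) ≤ 1 + 3 * x := by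
    refine sqrt_le_iff.2 ⟨by linarith, by nlinarith⟩
  norm_cast
  nlinarith

lemma intervalIntegral_bracketProduct_le {γ : ℝ} (hγ0 : 0 ≤ γ) (hγ1 : γ ≤ 1) (a : ℝ) :
    ∫ y in -(2 * japaneseBracket a)..(2 * japaneseBracket a), bracketProduct γ a y ≤
      24 * japaneseBracket a ^ (-γ) * log (1 + japaneseBracket a) := by
  set D := japaneseBracket a
  have hD : 1 ≤ D := one_le_japaneseBracket a
  have hInt (c : ℝ) (hc : |c| ≤ D) :
      ∫ y in -(2 * D)..(2 * D), (japaneseBracket (y + c))⁻¹ ≤ 6 * log (1 + D) :=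
    calc _ ≤ 2 * arsinh (2 * D + |c|) := intervalIntegral_inv_japaneseBracket_add_le c _
      _ ≤ 2 * arsinh (3 * D) := by
          gcongr
          linarith
      _ ≤ 6 * log (1 + D) := by linarith [arsinh_three_mul_le_three_mul_log hD]
  have hcont (c : ℝ) : Continuous fun y => (japaneseBracket (y + c))⁻¹ :=
    continuous_inv_japaneseBracket.comp (continuous_add_const c)
  calc _ ≤ ∫ y in -(2 * D)..(2 * D),
          2 * D ^ (-γ) * ((japaneseBracket y)⁻¹ + (japaneseBracket (y + a))⁻¹) :=
        intervalIntegral.integral_mono_on (by linarith)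
          ((continuous_bracketProduct γ a).intervalIntegrable _ _)
          ((continuous_inv_japaneseBracket.add (hcont a)).const_mul _ |>.intervalIntegrable _ _)
          fun y _ => bracketProduct_le_inv_add_inv hγ0 hγ1 a y
    _ = 2 * D ^ (-γ) * ((∫ y in -(2 * D)..(2 * D), (japaneseBracket y)⁻¹) +
          ∫ y in -(2 * D)..(2 * D), (japaneseBracket (y + a))⁻¹) := by
        rw [intervalIntegral.integral_const_mul, intervalIntegral.integral_add
          (continuous_inv_japaneseBracket.intervalIntegrable _ _) ((hcont a).intervalIntegrable _ _)]
    _ ≤ 2 * D ^ (-γ) * (6 * log (1 + D) + 6 * log (1 + D)) := by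
        gcongr
        · simpa using hInt 0 (by simp; linarith)
        · exact hInt a (abs_le_japaneseBracket a)
    _ = 24 * D ^ (-γ) * log (1 + D) := by ring

lemma setIntegral_Ioi_bracketProduct_le {γ : ℝ} (hγ0 : 0 < γ) (hγ1 : γ ≤ 1) (a : ℝ) :
    ∫ y in Ioi (2 * japaneseBracket a), bracketProduct γ a y ≤
      2 * japaneseBracket a ^ (-γ) / γ := by
  set D := japaneseBracket a
  have hD : 0 < D := japaneseBracket_pos a
  have hexp : -(1 + γ) < -1 := by linarith
  calc _ ≤ ∫ y in Ioi (2 * D), 2 * y ^ (-(1 + γ)) :=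
        setIntegral_mono_on (integrable_bracketProduct hγ0 a).integrableOn
          ((integrableOn_Ioi_rpow_of_lt hexp (by positivity)).const_mul 2) measurableSet_Ioi
          fun y hy => bracketProduct_le_two_mul_rpow_of_le hγ0.le hγ1 (le_of_lt hy)
    _ = 2 * (2 * D) ^ (-γ) / γ := by
        rw [integral_const_mul, integral_Ioi_rpow_of_lt hexp (by positivity),
          show -(1 + γ) + 1 = -γ by ring, neg_div_neg_eq, mul_div_assoc]
    _ ≤ 2 * D ^ (-γ) / γ := by
        gcongr 2 * ?_ / γ
        exact rpow_le_rpow_of_nonpos hD (by linarith) (by linarith)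

lemma setIntegral_Iic_bracketProduct_le {γ : ℝ} (hγ0 : 0 < γ) (hγ1 : γ ≤ 1) (a : ℝ) :
    ∫ y in Iic (-(2 * japaneseBracket a)), bracketProduct γ a y ≤
      2 * japaneseBracket a ^ (-γ) / γ := by
  rw [← integral_comp_neg_Ioi]
  simp_rw [bracketProduct_neg]
  simpa [japaneseBracket_neg] using setIntegral_Ioi_bracketProduct_le hγ0 hγ1 (-a)

theorem integral_bracketProduct_le {γ : ℝ} (hγ0 : 0 < γ) (hγ1 : γ ≤ 1) (a : ℝ) :
    ∫ y, bracketProduct γ a y ≤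
      (24 + 8 / γ) * japaneseBracket a ^ (-γ) * log (1 + japaneseBracket a) := by
  have hf := integrable_bracketProduct hγ0 a
  have hsplit : ∫ y, bracketProduct γ a y =
      (∫ y in Iic (-(2 * japaneseBracket a)), bracketProduct γ a y) +
      (∫ y in -(2 * japaneseBracket a)..(2 * japaneseBracket a), bracketProduct γ a y) +
      ∫ y in Ioi (2 * japaneseBracket a), bracketProduct γ a y := by
    rw [← intervalIntegral.integral_Iic_add_Ioi (b := 2 * japaneseBracket a) hf.integrableOn
      hf.integrableOn, ← intervalIntegral.integral_Iic_sub_Iic hf.integrableOn hf.integrableOn]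
    ring
  have hlog : 1 ≤ 2 * log (1 + japaneseBracket a) := by
    have : log 2 ≤ log (1 + japaneseBracket a) :=
      log_le_log two_pos (by linarith [one_le_japaneseBracket a])
    linarith [log_two_gt_d9]
  have hB : 0 ≤ japaneseBracket a ^ (-γ) / γ :=
    div_nonneg (rpow_nonneg (japaneseBracket_pos a).le _) hγ0.le
  rw [hsplit]
  linear_combination setIntegral_Iic_bracketProduct_le hγ0 hγ1 a +
    intervalIntegral_bracketProduct_le hγ0.le hγ1 a +
    setIntegral_Ioi_bracketProduct_le hγ0 hγ1 a + 4 * mul_le_mul_of_nonneg_left hlog hB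

theorem stmt_2 (γ : ℝ) (hγ0 : 0 < γ) (hγ1 : γ ≤ 1) :
    ∃ C : ℝ, 0 < C ∧ ∀ c₁ c₂ : ℝ,
      (∫ x : ℝ, (Real.sqrt (1 + (x - c₁) ^ 2)) ^ (-(1 : ℝ)) * (Real.sqrt (1 + (x - c₂) ^ 2)) ^ (-γ))
        ≤ C * (Real.sqrt (1 + (c₁ - c₂) ^ 2)) ^ (-γ)
            * Real.log (1 + Real.sqrt (1 + (c₁ - c₂) ^ 2)) := by
  refine ⟨24 + 8 / γ, by positivity, fun c₁ c₂ => ?_⟩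
  rw [← integral_add_right_eq_self _ c₁]
  simp only [add_sub_cancel_right, add_sub_assoc, rpow_neg_one]
  exact integral_bracketProduct_le hγ0 hγ1 (c₁ - c₂)
end

section
/- Let p > 1 and c₀, c₁, c₂ ∈ ℝ with c₂ ≠ 0. Then there is a constant C depending only on p such that ∫_ℝ ⟨c₂ x² + c₁ x + c₀⟩^{-p} dx ≤ C |c₂|^{-1/2} ⟨c₀ - c₁²/(4c₂)⟩^{-1/2}. -/
/-!
Completing the square and substituting `x = -c₁/(2c₂) + |c₂|^(-1/2) y` turns the integral
into `|c₂|^(-1/2) ∫ ⟨y² + d⟩^(-p) dy` with `d = c₀ - c₁²/(4c₂)` (for `c₂ < 0` after replacing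
the quadratic by its negative, which does not change `⟨·⟩`). With `m = √|d|` we have
`|y² - |d|| = (|y| + m) ||y| - m|`, and `|y| + m` dominates both `m` and `||y| - m|`, so
`⟨y² + d⟩ ≥ (1 + (1 + m) ||y| - m|) / 3`. Hence `⟨y² + d⟩^(-p)` is bounded by two copies
of `(1 + |t|)^(-p)`, centred at `±m` and compressed by the factor `1 + m ≥ ⟨d⟩^(1/2)`.
-/

open MeasureTheory Real

theorem integral_comp_mul_sub {E : Type*} [NormedAddCommGroup E] [NormedSpace ℝ E]
    (g : ℝ → E) (μ m : ℝ) : ∫ y, g (μ * (y - m)) = |μ⁻¹| • ∫ t, g t := by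
  rw [integral_sub_right_eq_self (fun y => g (μ * y)) m, Measure.integral_comp_mul_left]

theorem integral_comp_quadratic_of_pos {E : Type*} [NormedAddCommGroup E] [NormedSpace ℝ E]
    (g : ℝ → E) {a : ℝ} (ha : 0 < a) (b c : ℝ) :
    ∫ x, g (a * x ^ 2 + b * x + c)
      = a ^ (-(1 / 2 : ℝ)) • ∫ y, g (y ^ 2 + (c - b ^ 2 / (4 * a))) := by
  have hsquare (x : ℝ) :
      a * x ^ 2 + b * x + c = (√a * (x - -b / (2 * a))) ^ 2 + (c - b ^ 2 / (4 * a)) := by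
    rw [mul_pow, sq_sqrt ha.le]
    field_simp
    ring
  simp_rw [hsquare]
  rw [integral_comp_mul_sub (fun u => g (u ^ 2 + (c - b ^ 2 / (4 * a)))), sqrt_eq_rpow,
    ← rpow_neg_one, ← rpow_mul ha.le, abs_of_pos (by positivity)]
  norm_num

theorem integrable_one_add_abs_rpow_neg {p : ℝ} (hp : 1 < p) :
    Integrable (fun t : ℝ => (1 + |t|) ^ (-p)) := by
  simpa only [norm_eq_abs] using
    integrable_one_add_norm (E := ℝ) (μ := volume) (by simpa using hp)

theorem one_add_mul_abs_abs_sub_sqrt_le (y d : ℝ) :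
    1 + (1 + √|d|) * |(|y| - √|d|)| ≤ 3 * √(1 + (y ^ 2 + d) ^ 2) := by
  set m := √|d|
  set B := √(1 + (y ^ 2 + d) ^ 2)
  set u := |(|y| - m)|
  have hm : 0 ≤ m := sqrt_nonneg _
  have hu : 0 ≤ u := abs_nonneg _
  have hB_one : 1 ≤ B := one_le_sqrt.2 (by nlinarith)
  have hB_abs : |y ^ 2 + d| ≤ B := by
    rw [← sqrt_sq_eq_abs]
    exact sqrt_le_sqrt (by linarith)
  have hu_le : u ≤ |y| + m := abs_le.2 ⟨by linarith [abs_nonneg y], by linarith⟩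
  have hfactor : (|y| + m) * u ≤ B := by
    have hdiff : y ^ 2 - |d| = (|y| + m) * (|y| - m) := by
      rw [← sq_abs y, ← sq_sqrt (abs_nonneg d)]
      ring
    have : |(y ^ 2 - |d|)| ≤ |y ^ 2 + d| := by
      rcases abs_cases d with ⟨h, _⟩ | ⟨h, _⟩ <;> rw [h]
      · exact abs_le.2 ⟨by nlinarith [le_abs_self (y ^ 2 + d)],
          by linarith [le_abs_self (y ^ 2 + d)]⟩
      · rw [sub_neg_eq_add]
    rw [hdiff, abs_mul, abs_of_nonneg (by positivity : 0 ≤ |y| + m)] at this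
    linarith
  have hu_B : u ≤ B := by
    rcases le_total u 1 with h | h
    · linarith
    · nlinarith
  nlinarith [mul_nonneg (abs_nonneg y) hu]

theorem rpow_neg_sqrt_one_add_sq_add_le {p : ℝ} (hp : 0 ≤ p) (y d : ℝ) :
    √(1 + (y ^ 2 + d) ^ 2) ^ (-p)
      ≤ 3 ^ p * ((1 + |(1 + √|d|) * (y - √|d|)|) ^ (-p)
        + (1 + |(1 + √|d|) * (y - -√|d|)|) ^ (-p)) := by
  set μ := 1 + √|d|
  have hμ : 0 < μ := by positivity
  have hbound : √(1 + (y ^ 2 + d) ^ 2) ^ (-p) ≤ 3 ^ p * (1 + μ * |(|y| - √|d|)|) ^ (-p) :=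
    calc √(1 + (y ^ 2 + d) ^ 2) ^ (-p) ≤ ((1 + μ * |(|y| - √|d|)|) / 3) ^ (-p) :=
          rpow_le_rpow_of_nonpos (by positivity)
            (by linarith [one_add_mul_abs_abs_sub_sqrt_le y d]) (neg_nonpos.2 hp)
      _ = 3 ^ p * (1 + μ * |(|y| - √|d|)|) ^ (-p) := by
          rw [div_rpow (by positivity) (by norm_num), rpow_neg (by norm_num : (0 : ℝ) ≤ 3)]
          field_simp
  refine hbound.trans (mul_le_mul_of_nonneg_left ?_ (by positivity))
  rcases le_total 0 y with hy | hy
  · rw [abs_mul, abs_of_pos hμ, abs_of_nonneg hy]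
    exact le_add_of_nonneg_right (by positivity)
  · have h : μ * |(|y| - √|d|)| = |μ * (y - -√|d|)| := by
      rw [abs_mul, abs_of_pos hμ, abs_of_nonpos hy, ← abs_neg]
      ring_nf
    rw [h]
    exact le_add_of_nonneg_left (by positivity)

theorem inv_one_add_sqrt_abs_le (d : ℝ) :
    (1 + √|d|)⁻¹ ≤ √(1 + d ^ 2) ^ (-(1 / 2 : ℝ)) := by
  have hm : 0 ≤ √|d| := sqrt_nonneg _
  have hm_sq : √|d| ^ 2 = |d| := sq_sqrt (abs_nonneg d)
  rw [rpow_neg (sqrt_nonneg _), ← sqrt_eq_rpow]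
  refine inv_anti₀ (sqrt_pos.2 (sqrt_pos.2 (by positivity))) ?_
  refine sqrt_le_iff.2 ⟨by positivity, sqrt_le_iff.2 ⟨by positivity, ?_⟩⟩
  nlinarith [sq_abs d, pow_two_nonneg (√|d|), mul_nonneg hm (pow_two_nonneg (√|d|))]

theorem integral_rpow_neg_sqrt_one_add_sq_add_le {p : ℝ} (hp : 1 < p) (d : ℝ) :
    ∫ y, √(1 + (y ^ 2 + d) ^ 2) ^ (-p)
      ≤ 2 * 3 ^ p * (∫ t, (1 + |t|) ^ (-p)) * √(1 + d ^ 2) ^ (-(1 / 2 : ℝ)) := by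
  set μ := 1 + √|d|
  have hμ : 0 < μ := by positivity
  set φ : ℝ → ℝ := fun t => (1 + |t|) ^ (-p)
  have hint (s : ℝ) : Integrable fun y => φ (μ * (y - s)) :=
    ((integrable_one_add_abs_rpow_neg hp).comp_mul_left' hμ.ne').comp_sub_right s
  have hval (s : ℝ) : ∫ y, φ (μ * (y - s)) = μ⁻¹ * ∫ t, φ t := by
    rw [integral_comp_mul_sub, abs_of_pos (inv_pos.2 hμ), smul_eq_mul]
  calc ∫ y, √(1 + (y ^ 2 + d) ^ 2) ^ (-p)
      ≤ ∫ y, 3 ^ p * (φ (μ * (y - √|d|)) + φ (μ * (y - -√|d|))) :=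
        integral_mono_of_nonneg (.of_forall fun y => by positivity)
          (((hint _).add (hint _)).const_mul _)
          (.of_forall fun y => rpow_neg_sqrt_one_add_sq_add_le (by linarith) y d)
    _ = 2 * 3 ^ p * (∫ t, φ t) * μ⁻¹ := by
        rw [integral_const_mul, integral_add (hint _) (hint _), hval, hval]
        ring
    _ ≤ 2 * 3 ^ p * (∫ t, φ t) * √(1 + d ^ 2) ^ (-(1 / 2 : ℝ)) := by
        gcongr
        exact inv_one_add_sqrt_abs_le d

theorem integral_rpow_neg_sqrt_one_add_quadratic_sq_le {p : ℝ} (hp : 1 < p) {a : ℝ}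
    (ha : 0 < a) (b c : ℝ) :
    ∫ x, √(1 + (a * x ^ 2 + b * x + c) ^ 2) ^ (-p)
      ≤ 2 * 3 ^ p * (∫ t, (1 + |t|) ^ (-p)) * a ^ (-(1 / 2 : ℝ))
        * √(1 + (c - b ^ 2 / (4 * a)) ^ 2) ^ (-(1 / 2 : ℝ)) := by
  rw [integral_comp_quadratic_of_pos (fun z => √(1 + z ^ 2) ^ (-p)) ha, smul_eq_mul]
  calc a ^ (-(1 / 2 : ℝ)) * ∫ y, √(1 + (y ^ 2 + (c - b ^ 2 / (4 * a))) ^ 2) ^ (-p)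
      ≤ a ^ (-(1 / 2 : ℝ)) * (2 * 3 ^ p * (∫ t, (1 + |t|) ^ (-p))
          * √(1 + (c - b ^ 2 / (4 * a)) ^ 2) ^ (-(1 / 2 : ℝ))) := by
        gcongr
        exact integral_rpow_neg_sqrt_one_add_sq_add_le hp _
    _ = _ := by ring

theorem stmt_3 (p : ℝ) (hp : 1 < p) :
    ∃ C : ℝ, 0 < C ∧ ∀ c₀ c₁ c₂ : ℝ, c₂ ≠ 0 →
      (∫ x : ℝ, (Real.sqrt (1 + (c₂ * x ^ 2 + c₁ * x + c₀) ^ 2)) ^ (-p))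
        ≤ C * |c₂| ^ (-(1 / 2 : ℝ))
            * (Real.sqrt (1 + (c₀ - c₁ ^ 2 / (4 * c₂)) ^ 2)) ^ (-(1 / 2 : ℝ)) := by
  have hK : 0 < ∫ t : ℝ, (1 + |t|) ^ (-p) :=
    integral_pos_of_integrable_nonneg_nonzero (x := 0)
      ((continuous_const.add continuous_abs).rpow_const
        fun t => .inl (by positivity : (1 + |t| : ℝ) ≠ 0))
      (integrable_one_add_abs_rpow_neg hp) (fun t => by positivity) (by simp)
  refine ⟨2 * 3 ^ p * ∫ t : ℝ, (1 + |t|) ^ (-p), by positivity, fun c₀ c₁ c₂ hc₂ => ?_⟩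
  rcases hc₂.lt_or_gt with hneg | hpos
  · convert integral_rpow_neg_sqrt_one_add_quadratic_sq_le hp (neg_pos.2 hneg) (-c₁) (-c₀)
      using 3
    · congr 3
      ring
    · rw [abs_of_neg hneg]
    · congr 2
      ring
  · rw [abs_of_pos hpos]
    exact integral_rpow_neg_sqrt_one_add_quadratic_sq_le hp hpos c₁ c₀
end

section
/- Let p > 1/3 and c₀, c₁, c₂, c₃ ∈ ℝ with c₃ ≠ 0. Then there is a constant C depending only on p such that ∫_ℝ ⟨c₃ x³ + c₂ x² + c₁ x + c₀⟩^{-p} dx ≤ C |c₃|^{-1/3}. -/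
open MeasureTheory Real Polynomial

/-!
Over `ℂ` a real polynomial of degree `n` factors as `P x = c * ∏ (x - zᵢ)`, so
`|P x| ≥ |c| * tⁿ`, where `t` is the distance from `x` to the nearest `Re zᵢ`. Together with
`(1 + u²)ⁿ ≤ 2ⁿ⁻¹ (1 + u²ⁿ)` this bounds `⟨P x⟩^(-p)` by a sum over the roots of the rescaled
translates `⟨|c|^(1/n) (x - Re zᵢ)⟩^(-n p)`, each of integral `|c|^(-1/n) ∫ ⟨u⟩^(-n p)`, which
is finite because `n p > 1`.
-/

lemma one_add_sq_rpow_neg_le_of_pow_le_abs {n : ℕ} {p u y : ℝ} (hp : 0 ≤ p) (hu : 0 ≤ u)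
    (h : u ^ n ≤ |y|) :
    (1 + y ^ 2) ^ (-p / 2) ≤ ((2 : ℝ) ^ (n - 1)) ^ (p / 2) * (1 + u ^ 2) ^ (-(n * p) / 2) := by
  have h2 : (0 : ℝ) < 2 ^ (n - 1) := by positivity
  have hsq : (u ^ n) ^ 2 ≤ y ^ 2 := by
    simpa only [sq_abs] using pow_le_pow_left₀ (by positivity) h 2
  have hpow : (1 + u ^ 2) ^ n / 2 ^ (n - 1) ≤ 1 + y ^ 2 := by
    rw [div_le_iff₀' h2]
    calc (1 + u ^ 2) ^ n ≤ 2 ^ (n - 1) * (1 ^ n + (u ^ 2) ^ n) :=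
          add_pow_le zero_le_one (sq_nonneg u) n
      _ = 2 ^ (n - 1) * (1 + (u ^ n) ^ 2) := by ring
      _ ≤ 2 ^ (n - 1) * (1 + y ^ 2) := mul_le_mul_of_nonneg_left (by linarith) h2.le
  calc (1 + y ^ 2) ^ (-p / 2) ≤ ((1 + u ^ 2) ^ n / 2 ^ (n - 1)) ^ (-p / 2) :=
        rpow_le_rpow_of_nonpos (by positivity) hpow (by linarith)
    _ = ((2 : ℝ) ^ (n - 1)) ^ (p / 2) * (1 + u ^ 2) ^ (-(n * p) / 2) := by
        rw [div_rpow (by positivity) h2.le, ← rpow_natCast, ← rpow_mul (by positivity),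
          div_eq_mul_inv, ← rpow_neg h2.le, mul_comm]
        ring_nf

lemma integrable_one_add_sq_rpow_neg {r : ℝ} (hr : 1 < r) :
    Integrable fun u : ℝ => (1 + u ^ 2) ^ (-r / 2) := by
  simpa [Real.norm_eq_abs, sq_abs] using
    integrable_rpow_neg_one_add_norm_sq (E := ℝ) (μ := volume) (r := r) (by simpa using hr)

lemma integral_one_add_sq_rpow_neg_pos {r : ℝ} (hr : 1 < r) :
    0 < ∫ u : ℝ, (1 + u ^ 2) ^ (-r / 2) := by
  rw [integral_pos_iff_support_of_nonneg (fun u => by positivity)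
    (integrable_one_add_sq_rpow_neg hr), Function.support_eq_univ fun u => (by positivity)]
  simp

lemma integral_comp_mul_sub_s5 (g : ℝ → ℝ) (b a : ℝ) :
    ∫ x, g (b * (x - a)) = |b⁻¹| * ∫ u, g u := by
  rw [integral_sub_right_eq_self (fun y => g (b * y)) a, Measure.integral_comp_mul_left,
    smul_eq_mul]

namespace Polynomial

lemma abs_leadingCoeff_mul_prod_roots_le_abs_eval (P : ℝ[X]) (x : ℝ) :
    |P.leadingCoeff| * ((P.map (algebraMap ℝ ℂ)).roots.map fun z => |x - z.re|).prod
      ≤ |P.eval x| := by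
  set Q := P.map (algebraMap ℝ ℂ)
  have hQ : C (P.leadingCoeff : ℂ) * (Q.roots.map fun z => X - C z).prod = Q := by
    have := C_leadingCoeff_mul_prod_multiset_X_sub_C (p := Q) IsAlgClosed.card_roots_eq_natDegree
    rwa [leadingCoeff_map] at this
  have heval : ((P.eval x : ℝ) : ℂ) = P.leadingCoeff * (Q.roots.map fun z => (x : ℂ) - z).prod :=
    calc ((P.eval x : ℝ) : ℂ) = Q.eval (x : ℂ) := by
          rw [eval_map, ← Complex.coe_algebraMap, eval₂_at_apply]
      _ = _ := by
          conv_lhs => rw [← hQ]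
          simp [eval_multiset_prod, Multiset.map_map]
  have habs : |P.eval x| = |P.leadingCoeff| * (Q.roots.map fun z => ‖(x : ℂ) - z‖).prod := by
    rw [← Real.norm_eq_abs, ← Complex.norm_real, heval, norm_mul, Complex.norm_real,
      Real.norm_eq_abs, ← normHom_apply, map_multiset_prod, Multiset.map_map]
    rfl
  rw [habs]
  gcongr
  refine Multiset.prod_map_le_prod_map₀ _ _ (fun _ _ => abs_nonneg _) fun z _ => ?_
  simpa using Complex.abs_re_le_norm ((x : ℂ) - z)

lemma one_add_sq_eval_rpow_neg_le_sum_roots (P : ℝ[X]) (hP : P.natDegree ≠ 0) {p : ℝ}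
    (hp : 0 ≤ p) (x : ℝ) :
    (1 + P.eval x ^ 2) ^ (-p / 2) ≤ ((2 : ℝ) ^ (P.natDegree - 1)) ^ (p / 2) *
      ∑ z ∈ (P.map (algebraMap ℝ ℂ)).roots.toFinset,
        (1 + (|P.leadingCoeff| ^ (1 / P.natDegree : ℝ) * (x - z.re)) ^ 2) ^
          (-(P.natDegree * p) / 2) := by
  set n := P.natDegree
  set Q := P.map (algebraMap ℝ ℂ)
  set b := |P.leadingCoeff| ^ (1 / n : ℝ)
  have hcard : Q.roots.card = n :=
    IsAlgClosed.card_roots_map_eq_natDegree_of_injective P (algebraMap ℝ ℂ).injective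
  have hb : b ^ n = |P.leadingCoeff| := by
    rw [← rpow_natCast, ← rpow_mul (abs_nonneg _), one_div_mul_cancel (by exact_mod_cast hP),
      rpow_one]
  have hne : Q.roots.toFinset.Nonempty := by
    rw [Multiset.toFinset_nonempty, ← Multiset.card_pos, hcard]
    exact Nat.pos_of_ne_zero hP
  obtain ⟨a, ha, hmin⟩ := Q.roots.toFinset.exists_min_image (fun z => |x - z.re|) hne
  have hprod : |x - a.re| ^ n ≤ (Q.roots.map fun z => |x - z.re|).prod :=
    calc |x - a.re| ^ n = (Q.roots.map fun _ => |x - a.re|).prod := by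
          simp [Multiset.map_const', hcard]
      _ ≤ _ := Multiset.prod_map_le_prod_map₀ _ _ (fun _ _ => abs_nonneg _)
          fun z hz => hmin z (Multiset.mem_toFinset.2 hz)
  have hroot : (b * |x - a.re|) ^ n ≤ |P.eval x| := by
    rw [mul_pow, hb]
    exact (mul_le_mul_of_nonneg_left hprod (abs_nonneg _)).trans
      (abs_leadingCoeff_mul_prod_roots_le_abs_eval P x)
  calc (1 + P.eval x ^ 2) ^ (-p / 2)
      ≤ ((2 : ℝ) ^ (n - 1)) ^ (p / 2) * (1 + (b * |x - a.re|) ^ 2) ^ (-(n * p) / 2) :=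
        one_add_sq_rpow_neg_le_of_pow_le_abs hp (by positivity) hroot
    _ ≤ _ := by
        rw [mul_pow, sq_abs, ← mul_pow]
        gcongr
        exact Finset.single_le_sum (f := fun z : ℂ => (1 + (b * (x - z.re)) ^ 2) ^ (-(n * p) / 2))
          (fun _ _ => by positivity) ha

theorem integral_one_add_sq_eval_rpow_neg_le (P : ℝ[X]) {p : ℝ} (hp : 1 < P.natDegree * p) :
    ∫ x, (1 + P.eval x ^ 2) ^ (-p / 2) ≤
      P.natDegree * ((2 : ℝ) ^ (P.natDegree - 1)) ^ (p / 2) *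
        (∫ u : ℝ, (1 + u ^ 2) ^ (-(P.natDegree * p) / 2)) *
          |P.leadingCoeff| ^ (-(1 / P.natDegree : ℝ)) := by
  set n := P.natDegree
  set K := ((2 : ℝ) ^ (n - 1)) ^ (p / 2)
  set g : ℝ → ℝ := fun u => (1 + u ^ 2) ^ (-(n * p) / 2)
  set b := |P.leadingCoeff| ^ (1 / n : ℝ)
  set S := (P.map (algebraMap ℝ ℂ)).roots.toFinset
  have hn : n ≠ 0 := by
    rintro hn
    rw [hn, Nat.cast_zero, zero_mul] at hp
    linarith
  have hp0 : 0 ≤ p := by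
    have : (0 : ℝ) < n := by exact_mod_cast Nat.pos_of_ne_zero hn
    nlinarith
  have hlead : P.leadingCoeff ≠ 0 :=
    leadingCoeff_ne_zero.2 (ne_zero_of_natDegree_gt (Nat.pos_of_ne_zero hn))
  have hb : 0 < b := by positivity
  have hgi : ∀ a : ℝ, Integrable fun x => g (b * (x - a)) := fun a =>
    ((integrable_one_add_sq_rpow_neg hp).comp_mul_left' hb.ne').comp_sub_right a
  have hcard : S.card ≤ n := (Multiset.toFinset_card_le _).trans
    (IsAlgClosed.card_roots_map_eq_natDegree_of_injective P (algebraMap ℝ ℂ).injective).le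
  have hbinv : b⁻¹ = |P.leadingCoeff| ^ (-(1 / n : ℝ)) := by
    rw [rpow_neg (abs_nonneg _)]
  calc ∫ x, (1 + P.eval x ^ 2) ^ (-p / 2)
      ≤ ∫ x, K * ∑ z ∈ S, g (b * (x - z.re)) :=
        integral_mono_of_nonneg (.of_forall fun x => by positivity)
          ((integrable_finsetSum S fun z _ => hgi z.re).const_mul K)
          (.of_forall (P.one_add_sq_eval_rpow_neg_le_sum_roots hn hp0))
    _ = K * (S.card * (b⁻¹ * ∫ u, g u)) := by
        rw [integral_const_mul, integral_finsetSum S fun z _ => hgi z.re]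
        simp_rw [integral_comp_mul_sub_s5, abs_inv, abs_of_pos hb, Finset.sum_const, nsmul_eq_mul]
    _ ≤ K * (n * (b⁻¹ * ∫ u, g u)) := by gcongr
    _ = _ := by rw [hbinv]; ring

end Polynomial

theorem stmt_5 (p : ℝ) (hp : 1 / 3 < p) :
    ∃ C : ℝ, 0 < C ∧ ∀ c₀ c₁ c₂ c₃ : ℝ, c₃ ≠ 0 →
      (∫ x : ℝ, (Real.sqrt (1 + (c₃ * x ^ 3 + c₂ * x ^ 2 + c₁ * x + c₀) ^ 2)) ^ (-p))
        ≤ C * |c₃| ^ (-(1 / 3 : ℝ)) := by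
  have h3p : 1 < 3 * p := by linarith
  refine ⟨3 * ((2 : ℝ) ^ (3 - 1)) ^ (p / 2) * ∫ u : ℝ, (1 + u ^ 2) ^ (-(3 * p) / 2),
    mul_pos (by positivity) (integral_one_add_sq_rpow_neg_pos h3p), fun c₀ c₁ c₂ c₃ hc => ?_⟩
  have hbound := integral_one_add_sq_eval_rpow_neg_le
    (C c₃ * X ^ 3 + C c₂ * X ^ 2 + C c₁ * X + C c₀) (p := p)
    (by rw [natDegree_cubic hc]; push_cast; exact h3p)
  rw [natDegree_cubic hc, leadingCoeff_cubic hc, Nat.cast_ofNat] at hbound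
  convert hbound using 3 with x
  rw [sqrt_eq_rpow, ← rpow_mul (by positivity)]
  simp only [eval_add, eval_mul, eval_C, eval_pow, eval_X]
  ring_nf
end

section
/- Let ξ₁, ξ₂ ∈ ℝ with ξ₁ ≥ 0, ξ₂ ≤ −2, ξ₁ ≤ 1, and set ξ₃ = −ξ₁ − ξ₂. Then |ξ₂ (3ξ₁² + 3ξ₁ξ₂ + 2ξ₂² − 1)| ≥ c |ξ₂|³ for some absolute constant c > 0, and moreover |ξ₂| and |ξ₃| are comparable: (1/2)|ξ₂| ≤ |ξ₃| ≤ 2|ξ₂|. -/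
/-! Completing the square, `3a² + 3ab + 2b² = (5/4) b² + (3/4)(2a + b)²`, so the factor
`3a² + 3ab + 2b² - 1` is at least `b²` as soon as `b² ≥ 4`, whatever `a` is. The comparability
of `|ξ₂|` and `|ξ₃|` is the triangle inequality, since `|ξ₁| ≤ 1 ≤ |ξ₂| / 2`. -/

lemma sq_le_resonance_factor (a b : ℝ) (hb : 4 ≤ b ^ 2) :
    b ^ 2 ≤ 3 * a ^ 2 + 3 * a * b + 2 * b ^ 2 - 1 := by
  nlinarith [sq_nonneg (2 * a + b)]

lemma abs_pow_three_le_abs_mul_resonance_factor (a b : ℝ) (hb : 2 ≤ |b|) :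
    |b| ^ 3 ≤ |b * (3 * a ^ 2 + 3 * a * b + 2 * b ^ 2 - 1)| := by
  have hb2 : 4 ≤ b ^ 2 := by nlinarith [sq_abs b]
  have hQ := sq_le_resonance_factor a b hb2
  calc |b| ^ 3 = |b| * b ^ 2 := by rw [pow_succ', sq_abs]
    _ ≤ |b| * (3 * a ^ 2 + 3 * a * b + 2 * b ^ 2 - 1) := by gcongr
    _ = |b * (3 * a ^ 2 + 3 * a * b + 2 * b ^ 2 - 1)| := by
      rw [abs_mul, abs_of_nonneg (by linarith : 0 ≤ 3 * a ^ 2 + 3 * a * b + 2 * b ^ 2 - 1)]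

lemma abs_add_mem_Icc_of_abs_le_half {a b : ℝ} (h : |a| ≤ |b| / 2) :
    |b| / 2 ≤ |a + b| ∧ |a + b| ≤ 2 * |b| := by
  have hle := abs_add_le a b
  have hge : |b| - |a| ≤ |a + b| := by
    simpa [abs_neg, add_comm] using abs_sub_abs_le_abs_sub b (-a)
  constructor <;> linarith [abs_nonneg b]

theorem stmt_9 :
    ∃ c : ℝ, 0 < c ∧ ∀ ξ₁ ξ₂ : ℝ, 0 ≤ ξ₁ → ξ₁ ≤ 1 → ξ₂ ≤ -2 →
      |ξ₂ * (3 * ξ₁ ^ 2 + 3 * ξ₁ * ξ₂ + 2 * ξ₂ ^ 2 - 1)| ≥ c * |ξ₂| ^ 3 ∧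
      (1 / 2) * |ξ₂| ≤ |(-ξ₁ - ξ₂)| ∧ |(-ξ₁ - ξ₂)| ≤ 2 * |ξ₂| := by
  refine ⟨1, one_pos, fun ξ₁ ξ₂ h0 h1 h2 => ?_⟩
  have hξ₂ : 2 ≤ |ξ₂| := by rw [abs_of_neg (by linarith)]; linarith
  have hξ₁ : |ξ₁| ≤ |ξ₂| / 2 := by rw [abs_of_nonneg h0]; linarith
  obtain ⟨hlower, hupper⟩ := abs_add_mem_Icc_of_abs_le_half hξ₁
  rw [show -ξ₁ - ξ₂ = -(ξ₁ + ξ₂) by ring, abs_neg]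
  exact ⟨by simpa using abs_pow_three_le_abs_mul_resonance_factor ξ₁ ξ₂ hξ₂,
    by linarith, hupper⟩
end
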